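/- arXiv:2110.10725 — 2 statements merged into one kernel-verified Lean document; each statement's English description precedes it below -/
import Mathlib

section
/- Fix d ∈ ℕ and β > 0 with dβ ≤ 1/8. Let μ be a distribution on [m]×[m] with both marginals equal to ν, satisfying μ(a,a) ≥ (1−β)ν(a) for all a ∈ [m]. Then for every f : [m]^n → ℝ (with the product measure ν^⊗n) and every coordinate i ∈ [n], the degree-d influence satisfies I_i^{≤d}[f] ≤ 2 I_i[T_μ^{⊗n} f], where T_μ^{⊗n} is the n-fold tensor product of the Markov operator T_μ. -/
/-!
Write `f = ∑_S f^{=S}`. Since both marginals of `μ` are `ν`, the operator `T = T_μ^{⊗n}`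
commutes with every coordinate average `E_j`; hence the `T f^{=S}` again depend only on the
coordinates in `S` and have mean zero in each of them, so they are orthogonal and
`I_i[T f] = ∑_{S ∋ i} ‖T f^{=S}‖²`. It remains to show `‖g‖² ≤ 2 ‖T g‖²` when `g` depends on at
most `d` coordinates. `⟪T g, g⟫ = E[g(x) g(y)]` for `(x, y) ∼ μ^{⊗n}`; replacing the diagonal
coupling by `μ` one coordinate at a time changes this expectation not at all on the coordinates
`g` ignores, and, by a Schur test, by at most `2β‖g‖²` on the others. So
`⟪T g, g⟫ ≥ (1 - 2dβ)‖g‖² ≥ ¾‖g‖²`, and Cauchy–Schwarz gives `‖T g‖² ≥ (9/16)‖g‖²`.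
-/

open Finset Function

theorem DependsOn.apply_update_of_notMem {ι β γ : Type*} [DecidableEq ι] {f : (ι → β) → γ}
    {s : Set ι} (hf : DependsOn f s) {j : ι} (hj : j ∉ s) (x : ι → β) (a : β) :
    f (Function.update x j a) = f x :=
  hf fun _ hk => update_of_ne (ne_of_mem_of_not_mem hk hj) a x

section Coordinates

variable {ι β M : Type*} [Fintype ι] [DecidableEq ι]

theorem sum_sum_update_swap [Fintype β] [AddCommMonoid M] (j : ι) (G : (ι → β) → β → M) :
    ∑ x, ∑ a, G x a = ∑ x, ∑ a, G (update x j a) (x j) := by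
  have hinv : Involutive fun q : (ι → β) × β => (update q.1 j q.2, q.1 j) := fun q => by
    simp [update_idem, update_eq_self]
  rw [← Fintype.sum_prod_type', ← Fintype.sum_prod_type']
  exact (Equiv.sum_comp hinv.toPerm fun q => G q.1 q.2).symm

theorem prod_apply_update [CommMonoid M] (c : ι → β → M) (x : ι → β) (j : ι) (a : β) :
    ∏ k, c k (update x j a k) = c j a * ∏ k ∈ univ.erase j, c k (x k) := by
  rw [← mul_prod_erase univ _ (mem_univ j), update_self]
  congr 1
  exact prod_congr rfl fun k hk => by rw [update_of_ne (ne_of_mem_erase hk)]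

theorem prod_update_apply [CommMonoid M] (c : ι → β → M) (j : ι) (d : β → M) (x : ι → β) :
    ∏ k, update c j d k (x k) = d (x j) * ∏ k ∈ univ.erase j, c k (x k) := by
  rw [← mul_prod_erase univ _ (mem_univ j), update_self]
  congr 1
  exact prod_congr rfl fun k hk => by rw [update_of_ne (ne_of_mem_erase hk)]

theorem mul_prod_comp_update [CommMonoid M] (c : β → M) (x : ι → β) (j : ι) (a : β) :
    c (x j) * ∏ k, c (update x j a k) = c a * ∏ k, c (x k) := by
  rw [prod_apply_update (fun _ => c), ← mul_prod_erase univ (fun k => c (x k)) (mem_univ j),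
    mul_left_comm]

theorem card_mul_sum_mul_of_update_invariant [Fintype β] (j : ι) (c : β → ℝ) {Q : (ι → β) → ℝ}
    (hQ : ∀ z b, Q (update z j b) = Q z) :
    Fintype.card β * ∑ z, c (z j) * Q z = (∑ b, c b) * ∑ z, Q z := by
  calc (Fintype.card β : ℝ) * ∑ z, c (z j) * Q z = ∑ z, ∑ _b : β, c (z j) * Q z := by
        simp [mul_sum]
    _ = ∑ z, ∑ b, c b * Q z := by
        rw [sum_sum_update_swap j]
        simp only [update_self, hQ]
    _ = (∑ b, c b) * ∑ z, Q z := by rw [sum_comm, sum_mul_sum]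

theorem sum_mul_eq_of_update_invariant [Fintype β] (j : ι) {c c' : β → ℝ}
    (hc : ∑ b, c b = ∑ b, c' b) {Q : (ι → β) → ℝ} (hQ : ∀ z b, Q (update z j b) = Q z) :
    ∑ z, c (z j) * Q z = ∑ z, c' (z j) * Q z := by
  rcases isEmpty_or_nonempty β with hβ | hβ
  · have : IsEmpty (ι → β) := ⟨fun z => isEmptyElim (z j)⟩
    simp
  · have hcard : (Fintype.card β : ℝ) ≠ 0 := by positivity
    apply mul_left_cancel₀ hcard
    rw [card_mul_sum_mul_of_update_invariant j c hQ, card_mul_sum_mul_of_update_invariant j c' hQ,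
      hc]

end Coordinates

section CoordAvg

variable {ι α : Type*} [DecidableEq ι] [Fintype α] (ν : α → ℝ)

def coordAvg (j : ι) (g : (ι → α) → ℝ) (x : ι → α) : ℝ := ∑ a, ν a * g (update x j a)

variable {ν}

theorem coordAvg_update (j : ι) (g : (ι → α) → ℝ) (x : ι → α) (b : α) :
    coordAvg ν j g (update x j b) = coordAvg ν j g x := by
  simp only [coordAvg, update_idem]

theorem coordAvg_eq_self (hν : ∑ a, ν a = 1) {j : ι} {g : (ι → α) → ℝ}
    (hg : ∀ x a, g (update x j a) = g x) : coordAvg ν j g = g := by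
  funext x
  simp only [coordAvg, hg, ← sum_mul, hν, one_mul]

theorem coordAvg_sum {σ : Type*} (s : Finset σ) (j : ι) (G : σ → (ι → α) → ℝ) (x : ι → α) :
    coordAvg ν j (fun x => ∑ S ∈ s, G S x) x = ∑ S ∈ s, coordAvg ν j (G S) x := by
  simp only [coordAvg, mul_sum]
  exact sum_comm

end CoordAvg

section WeightedInner

variable {ι α : Type*} [Fintype ι] [DecidableEq ι] [Fintype α] (ν : α → ℝ)

def weightedInner (g h : (ι → α) → ℝ) : ℝ := ∑ x, (∏ k, ν (x k)) * g x * h x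

/-- `I_i[g]`, defined as `‖g - E_i g‖²` rather than through the Efron–Stein decomposition;
`influence_eq_sum` shows that the two agree. -/
def influence (i : ι) (g : (ι → α) → ℝ) : ℝ :=
  ∑ x, (∏ k, ν (x k)) * (g x - coordAvg ν i g x) ^ 2

variable {ν}

theorem weightedInner_comm (g h : (ι → α) → ℝ) : weightedInner ν g h = weightedInner ν h g := by
  unfold weightedInner
  exact sum_congr rfl fun x _ => by ring

theorem weightedInner_self (g : (ι → α) → ℝ) :
    weightedInner ν g g = ∑ x, (∏ k, ν (x k)) * g x ^ 2 :=
  sum_congr rfl fun x _ => by ring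

theorem weightedInner_self_nonneg (hν : ∀ a, 0 ≤ ν a) (g : (ι → α) → ℝ) :
    0 ≤ weightedInner ν g g := by
  rw [weightedInner_self]
  exact sum_nonneg fun x _ => mul_nonneg (prod_nonneg fun k _ => hν _) (sq_nonneg _)

theorem eq_zero_of_weightedInner_self_eq_zero (hν : ∀ a, 0 < ν a) {g : (ι → α) → ℝ}
    (hg : weightedInner ν g g = 0) : g = 0 := by
  rw [weightedInner_self, sum_eq_zero_iff_of_nonneg fun x _ =>
    mul_nonneg (prod_nonneg fun k _ => (hν _).le) (sq_nonneg _)] at hg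
  funext x
  simpa [(prod_pos fun k _ => hν (x k)).ne'] using hg x (mem_univ x)

theorem weightedInner_sq_le (hν : ∀ a, 0 ≤ ν a) (g h : (ι → α) → ℝ) :
    weightedInner ν g h ^ 2 ≤ weightedInner ν g g * weightedInner ν h h := by
  rw [weightedInner_self, weightedInner_self]
  refine sum_sq_le_sum_mul_sum_of_sq_le_mul _
    (fun x _ => mul_nonneg (prod_nonneg fun k _ => hν _) (sq_nonneg _))
    (fun x _ => mul_nonneg (prod_nonneg fun k _ => hν _) (sq_nonneg _)) fun x _ => le_of_eq ?_
  ring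

theorem weightedInner_sum_self_of_pairwise {σ : Type*} (s : Finset σ) (G : σ → (ι → α) → ℝ)
    (hG : (s : Set σ).Pairwise fun S T => weightedInner ν (G S) (G T) = 0) :
    weightedInner ν (fun x => ∑ S ∈ s, G S x) (fun x => ∑ S ∈ s, G S x) =
      ∑ S ∈ s, weightedInner ν (G S) (G S) := by
  have hsplit : weightedInner ν (fun x => ∑ S ∈ s, G S x) (fun x => ∑ S ∈ s, G S x) =
      ∑ S ∈ s, ∑ T ∈ s, weightedInner ν (G S) (G T) := by
    simp only [weightedInner, mul_sum, sum_mul]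
    rw [sum_comm]
    refine sum_congr rfl fun S _ => ?_
    rw [sum_comm]
    exact sum_congr rfl fun T _ => sum_congr rfl fun x _ => by ring
  rw [hsplit]
  exact sum_congr rfl fun S hS =>
    sum_eq_single_of_mem S hS fun T hT hTS => hG hS hT (Ne.symm hTS)

theorem weightedInner_coordAvg_left (j : ι) (g h : (ι → α) → ℝ) :
    weightedInner ν (coordAvg ν j g) h = weightedInner ν g (coordAvg ν j h) := by
  calc weightedInner ν (coordAvg ν j g) h
      = ∑ x, ∑ a, ν a * (∏ k, ν (x k)) * g (update x j a) * h x := by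
        simp only [weightedInner, coordAvg, mul_sum, sum_mul]
        exact sum_congr rfl fun x _ => sum_congr rfl fun a _ => by ring
    _ = ∑ x, ∑ a, ν (x j) * (∏ k, ν (update x j a k)) * g x * h (update x j a) := by
        rw [sum_sum_update_swap j]
        simp only [update_idem, update_eq_self]
    _ = weightedInner ν g (coordAvg ν j h) := by
        simp only [mul_prod_comp_update, weightedInner, coordAvg, mul_sum]
        exact sum_congr rfl fun x _ => sum_congr rfl fun a _ => by ring

theorem weightedInner_eq_zero_of_coordAvg_eq_zero (hν : ∑ a, ν a = 1) {j : ι}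
    {g h : (ι → α) → ℝ} (hg : ∀ x a, g (update x j a) = g x) (hh : coordAvg ν j h = 0) :
    weightedInner ν g h = 0 := by
  rw [← coordAvg_eq_self hν hg, weightedInner_coordAvg_left, hh]
  simp [weightedInner]

theorem coordAvg_eq_zero_of_orthogonal (hν : ∀ a, 0 < ν a) (hν1 : ∑ a, ν a = 1)
    {S : Finset ι} {j : ι} {F : (ι → α) → ℝ} (hF : DependsOn F S)
    (horth : ∀ g, DependsOn g (S.erase j) → weightedInner ν F g = 0) : coordAvg ν j F = 0 := by
  have hdep : DependsOn (coordAvg ν j F) (S.erase j) := fun x y hxy =>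
    sum_congr rfl fun a _ => congrArg _ (hF.update j a hxy)
  apply eq_zero_of_weightedInner_self_eq_zero hν
  rw [weightedInner_coordAvg_left, coordAvg_eq_self hν1 (coordAvg_update j F)]
  exact horth _ hdep

end WeightedInner

section Couplings

variable {α : Type*} [Fintype α]

structure IsSelfCoupling (ν : α → ℝ) (π : α × α → ℝ) : Prop where
  nonneg : ∀ p, 0 ≤ π p
  marginal_fst : ∀ a, ∑ b, π (a, b) = ν a
  marginal_snd : ∀ b, ∑ a, π (a, b) = ν b

variable {μ : α × α → ℝ} {ν : α → ℝ}

theorem IsSelfCoupling.sum_eq_one (hμ : IsSelfCoupling ν μ) (hν : ∑ a, ν a = 1) :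
    ∑ p, μ p = 1 := by
  rw [Fintype.sum_prod_type]
  simp only [hμ.marginal_fst, hν]

theorem sum_abs_sub_single_sum {β : Type*} [Fintype β] [DecidableEq β] {e : β → ℝ}
    (he : ∀ b, 0 ≤ e b) (a : β) :
    ∑ b, |e b - (Pi.single a (∑ b', e b') : β → ℝ) b| = 2 * (∑ b, e b - e a) := by
  have hle : e a ≤ ∑ b, e b := single_le_sum (fun b _ => he b) (mem_univ a)
  have hpt : ∀ b, |e b - (Pi.single a (∑ b', e b') : β → ℝ) b| =
      e b - (Pi.single a (∑ b', e b') : β → ℝ) b +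
        (Pi.single a (2 * (∑ b', e b' - e a)) : β → ℝ) b := by
    intro b
    rcases eq_or_ne b a with rfl | hb
    · rw [Pi.single_eq_same, Pi.single_eq_same, abs_of_nonpos (by linarith)]
      ring
    · simp [hb, abs_of_nonneg (he b)]
  simp only [hpt, sum_add_distrib, sum_sub_distrib, sum_pi_single', mem_univ, if_true]
  ring

variable [DecidableEq α]

def diagCoupling (ν : α → ℝ) (p : α × α) : ℝ := if p.1 = p.2 then ν p.1 else 0

theorem isSelfCoupling_diagCoupling (hν : ∀ a, 0 ≤ ν a) : IsSelfCoupling ν (diagCoupling ν) where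
  nonneg p := by unfold diagCoupling; split_ifs <;> simp [hν]
  marginal_fst a := by simp [diagCoupling]
  marginal_snd b := by simp [diagCoupling]

theorem IsSelfCoupling.sum_abs_sub_diagCoupling_row (hμ : IsSelfCoupling ν μ) (a : α) :
    ∑ b, |μ (a, b) - diagCoupling ν (a, b)| = 2 * (ν a - μ (a, a)) := by
  rw [← hμ.marginal_fst a, ← sum_abs_sub_single_sum (fun b => hμ.nonneg (a, b)) a,
    hμ.marginal_fst a]
  refine sum_congr rfl fun b _ => ?_
  rcases eq_or_ne b a with rfl | hb <;> simp [diagCoupling, *, Ne.symm]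

theorem IsSelfCoupling.sum_abs_sub_diagCoupling_col (hμ : IsSelfCoupling ν μ) (b : α) :
    ∑ a, |μ (a, b) - diagCoupling ν (a, b)| = 2 * (ν b - μ (b, b)) := by
  rw [← hμ.marginal_snd b, ← sum_abs_sub_single_sum (fun a => hμ.nonneg (a, b)) b,
    hμ.marginal_snd b]
  refine sum_congr rfl fun a _ => ?_
  rcases eq_or_ne a b with rfl | ha <;> simp [diagCoupling, *]

end Couplings

section MarkovOp

variable {ι α : Type*} [Fintype ι] [DecidableEq ι] [Fintype α]

/-- `T_μ^{⊗ι}`: `μ (a, b) / ν b` is the probability of `a` given `b` under `μ`. -/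
noncomputable def markovOp (μ : α × α → ℝ) (ν : α → ℝ) (g : (ι → α) → ℝ) (y : ι → α) : ℝ :=
  ∑ x, (∏ k, μ (x k, y k) / ν (y k)) * g x

variable {μ : α × α → ℝ} {ν : α → ℝ}

theorem markovOp_sum {σ : Type*} (s : Finset σ) (G : σ → (ι → α) → ℝ) (y : ι → α) :
    markovOp μ ν (fun x => ∑ S ∈ s, G S x) y = ∑ S ∈ s, markovOp μ ν (G S) y := by
  simp only [markovOp, mul_sum]
  exact sum_comm

theorem coordAvg_markovOp_apply (hν : ∀ a, 0 < ν a) (hμ : IsSelfCoupling ν μ) (j : ι)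
    (g : (ι → α) → ℝ) (y : ι → α) :
    coordAvg ν j (markovOp μ ν g) y =
      ∑ x, ν (x j) * (∏ k ∈ univ.erase j, μ (x k, y k) / ν (y k)) * g x := by
  simp only [coordAvg, markovOp, mul_sum]
  rw [sum_comm]
  refine sum_congr rfl fun x _ => ?_
  rw [← hμ.marginal_fst (x j), sum_mul, sum_mul]
  refine sum_congr rfl fun a _ => ?_
  rw [prod_apply_update (fun k b => μ (x k, b) / ν b)]
  field_simp [(hν a).ne']

theorem markovOp_coordAvg_apply (hν : ∀ a, 0 < ν a) (hμ : IsSelfCoupling ν μ) (j : ι)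
    (g : (ι → α) → ℝ) (y : ι → α) :
    markovOp μ ν (coordAvg ν j g) y =
      ∑ x, ν (x j) * (∏ k ∈ univ.erase j, μ (x k, y k) / ν (y k)) * g x := by
  simp only [coordAvg, markovOp, mul_sum]
  rw [sum_sum_update_swap j]
  refine sum_congr rfl fun x _ => ?_
  simp only [update_idem, update_eq_self,
    prod_apply_update (fun k b => μ (b, y k) / ν (y k))]
  rw [← sum_mul, ← sum_mul, ← sum_div, hμ.marginal_snd, div_self (hν _).ne', one_mul]
  ring

theorem coordAvg_markovOp (hν : ∀ a, 0 < ν a) (hμ : IsSelfCoupling ν μ) (j : ι)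
    (g : (ι → α) → ℝ) : coordAvg ν j (markovOp μ ν g) = markovOp μ ν (coordAvg ν j g) := by
  funext y
  rw [coordAvg_markovOp_apply hν hμ, markovOp_coordAvg_apply hν hμ]

theorem markovOp_update_of_update_invariant (hν : ∀ a, 0 < ν a) (hν1 : ∑ a, ν a = 1)
    (hμ : IsSelfCoupling ν μ) {j : ι} {g : (ι → α) → ℝ} (hg : ∀ x a, g (update x j a) = g x)
    (y : ι → α) (a : α) : markovOp μ ν g (update y j a) = markovOp μ ν g y := by
  have hfix : markovOp μ ν g = coordAvg ν j (markovOp μ ν g) := by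
    rw [coordAvg_markovOp hν hμ, coordAvg_eq_self hν1 hg]
  rw [hfix, coordAvg_update]

theorem coordAvg_markovOp_eq_zero (hν : ∀ a, 0 < ν a) (hμ : IsSelfCoupling ν μ) {j : ι}
    {g : (ι → α) → ℝ} (hg : coordAvg ν j g = 0) : coordAvg ν j (markovOp μ ν g) = 0 := by
  rw [coordAvg_markovOp hν hμ, hg]
  funext y
  simp [markovOp]

end MarkovOp

section PairForm

variable {ι α : Type*} [Fintype ι] [DecidableEq ι] [Fintype α] {μ : α × α → ℝ} {ν : α → ℝ}

theorem sum_pi_prod {β γ M : Type*} [Fintype β] [Fintype γ] [AddCommMonoid M]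
    (G : (ι → β × γ) → M) : ∑ z, G z = ∑ x : ι → β, ∑ y : ι → γ, G fun k => (x k, y k) := by
  rw [← Fintype.sum_prod_type']
  exact (Equiv.sum_comp (Equiv.arrowProdEquivProdArrow ι (fun _ => β) (fun _ => γ)).symm G).symm

theorem sum_prod_mul_comp_fst {β γ : Type*} [Fintype β] [Fintype γ] (c : ι → β × γ → ℝ)
    (φ : (ι → β) → ℝ) :
    ∑ z : ι → β × γ, (∏ k, c k (z k)) * φ (Prod.fst ∘ z) =
      ∑ x, (∏ k, ∑ b, c k (x k, b)) * φ x := by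
  rw [sum_pi_prod]
  refine sum_congr rfl fun x _ => ?_
  change ∑ y : ι → γ, (∏ k, c k (x k, y k)) * φ x = _
  rw [← sum_mul, Fintype.prod_sum]

theorem sum_prod_mul_comp_snd {β γ : Type*} [Fintype β] [Fintype γ] (c : ι → β × γ → ℝ)
    (φ : (ι → γ) → ℝ) :
    ∑ z : ι → β × γ, (∏ k, c k (z k)) * φ (Prod.snd ∘ z) =
      ∑ y, (∏ k, ∑ a, c k (a, y k)) * φ y := by
  rw [sum_pi_prod, sum_comm]
  refine sum_congr rfl fun y _ => ?_
  change ∑ x : ι → β, (∏ k, c k (x k, y k)) * φ y = _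
  rw [← sum_mul, Fintype.prod_sum]

/-- `E[g(x) h(y)]` for `(x, y) ∼ ⊗ₖ κ k`, with `(x, y)` encoded as `z : ι → α × α`. -/
def pairForm (κ : ι → α × α → ℝ) (g h : (ι → α) → ℝ) : ℝ :=
  ∑ z : ι → α × α, (∏ k, κ k (z k)) * (g (Prod.fst ∘ z) * h (Prod.snd ∘ z))

theorem pairForm_update (κ : ι → α × α → ℝ) (j : ι) (π : α × α → ℝ) (g h : (ι → α) → ℝ) :
    pairForm (update κ j π) g h =
      ∑ z, π (z j) * ((∏ k ∈ univ.erase j, κ k (z k)) * (g (Prod.fst ∘ z) * h (Prod.snd ∘ z))) :=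
  sum_congr rfl fun z _ => by rw [prod_update_apply, mul_assoc]

theorem pairForm_update_sub (κ : ι → α × α → ℝ) (j : ι) (π π' : α × α → ℝ)
    (g h : (ι → α) → ℝ) :
    pairForm (update κ j π) g h - pairForm (update κ j π') g h =
      pairForm (update κ j (π - π')) g h := by
  simp only [pairForm_update, ← sum_sub_distrib, ← sub_mul, Pi.sub_apply]

theorem pairForm_update_congr (κ : ι → α × α → ℝ) {j : ι} {π π' : α × α → ℝ}
    (hπ : ∑ p, π p = ∑ p, π' p) {g h : (ι → α) → ℝ} (hg : ∀ x a, g (update x j a) = g x)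
    (hh : ∀ x a, h (update x j a) = h x) :
    pairForm (update κ j π) g h = pairForm (update κ j π') g h := by
  rw [pairForm_update, pairForm_update]
  refine sum_mul_eq_of_update_invariant j hπ fun z p => ?_
  rw [comp_update, comp_update, hg, hh]
  congr 1
  exact prod_congr rfl fun k hk => by rw [update_of_ne (ne_of_mem_erase hk)]

theorem abs_pairForm_self_le (κ : ι → α × α → ℝ) (r s : ι → α → ℝ)
    (hr : ∀ k a, ∑ b, |κ k (a, b)| ≤ r k a) (hs : ∀ k b, ∑ a, |κ k (a, b)| ≤ s k b)
    (g : (ι → α) → ℝ) :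
    |pairForm κ g g| ≤
      (∑ x, (∏ k, r k (x k)) * g x ^ 2 + ∑ x, (∏ k, s k (x k)) * g x ^ 2) / 2 := by
  have hamgm (u v : ℝ) : |u * v| ≤ (u ^ 2 + v ^ 2) / 2 := by
    rw [abs_mul]
    nlinarith [sq_nonneg (|u| - |v|), sq_abs u, sq_abs v]
  calc |pairForm κ g g|
      ≤ ∑ z : ι → α × α,
          (∏ k, |κ k (z k)|) * ((g (Prod.fst ∘ z) ^ 2 + g (Prod.snd ∘ z) ^ 2) / 2) := by
        refine (abs_sum_le_sum_abs _ _).trans (sum_le_sum fun z _ => ?_)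
        rw [abs_mul, abs_prod]
        exact mul_le_mul_of_nonneg_left (hamgm _ _) (prod_nonneg fun k _ => abs_nonneg _)
    _ = (∑ x, (∏ k, ∑ b, |κ k (x k, b)|) * g x ^ 2 +
          ∑ y, (∏ k, ∑ a, |κ k (a, y k)|) * g y ^ 2) / 2 := by
        rw [← sum_prod_mul_comp_fst (fun k p => |κ k p|),
          ← sum_prod_mul_comp_snd (fun k p => |κ k p|), ← sum_add_distrib, sum_div]
        exact sum_congr rfl fun z _ => by ring
    _ ≤ _ := by
        gcongr
        · exact hr _ _
        · exact hs _ _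

theorem pairForm_eq_weightedInner_markovOp (hν : ∀ a, 0 < ν a) (g h : (ι → α) → ℝ) :
    pairForm (fun _ => μ) g h = weightedInner ν (markovOp μ ν g) h := by
  rw [pairForm, sum_pi_prod, sum_comm]
  simp only [weightedInner, markovOp, mul_sum, sum_mul]
  refine sum_congr rfl fun y _ => sum_congr rfl fun x _ => ?_
  change (∏ k, μ (x k, y k)) * (g x * h y) = _
  rw [prod_div_distrib]
  field_simp [(prod_pos fun k _ => hν (y k)).ne']

theorem pairForm_diagCoupling [DecidableEq α] (g h : (ι → α) → ℝ) :
    pairForm (fun _ => diagCoupling ν) g h = weightedInner ν g h := by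
  rw [pairForm, sum_pi_prod]
  simp [diagCoupling, Fintype.prod_ite_zero, ← funext_iff, weightedInner, mul_assoc]
  rfl

end PairForm

section Hybrid

variable {ι α : Type*} [DecidableEq ι] [DecidableEq α] {μ : α × α → ℝ} {ν : α → ℝ}

/-- Interpolates between `⟪g, h⟫` (`A = ∅`) and `⟪T_μ g, h⟫` (`A = univ`) in `pairForm`. -/
def hybridCoupling (μ : α × α → ℝ) (ν : α → ℝ) (A : Finset ι) : ι → α × α → ℝ :=
  A.piecewise (fun _ => μ) fun _ => diagCoupling ν

theorem isSelfCoupling_hybridCoupling [Fintype α] (hν : ∀ a, 0 ≤ ν a) (hμ : IsSelfCoupling ν μ)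
    (A : Finset ι) (k : ι) : IsSelfCoupling ν (hybridCoupling μ ν A k) := by
  unfold hybridCoupling
  by_cases hk : k ∈ A
  · rwa [piecewise_eq_of_mem _ _ _ hk]
  · rw [piecewise_eq_of_notMem _ _ _ hk]
    exact isSelfCoupling_diagCoupling hν

theorem hybridCoupling_insert (A : Finset ι) (k : ι) :
    hybridCoupling μ ν (insert k A) = update (hybridCoupling μ ν A) k μ :=
  piecewise_insert A _ _ k

theorem hybridCoupling_eq_update_of_notMem {A : Finset ι} {k : ι} (hk : k ∉ A) :
    hybridCoupling μ ν A = update (hybridCoupling μ ν A) k (diagCoupling ν) := by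
  rw [eq_comm, update_eq_self_iff]
  exact (piecewise_eq_of_notMem A (fun _ => μ) (fun _ => diagCoupling ν) hk).symm

variable [Fintype ι] [Fintype α]

theorem abs_pairForm_update_sub_le {β : ℝ} {κ : ι → α × α → ℝ}
    (hκ : ∀ k, IsSelfCoupling ν (κ k)) (hμ : IsSelfCoupling ν μ)
    (hdiag : ∀ a, (1 - β) * ν a ≤ μ (a, a)) (j : ι) (g : (ι → α) → ℝ) :
    |pairForm (update κ j μ) g g - pairForm (update κ j (diagCoupling ν)) g g| ≤
      2 * β * weightedInner ν g g := by
  set r : ι → α → ℝ := fun k a => (if k = j then 2 * β else 1) * ν a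
  have hrow : ∀ k a, ∑ b, |update κ j (μ - diagCoupling ν) k (a, b)| ≤ r k a := by
    intro k a
    rcases eq_or_ne k j with rfl | hk
    · simp only [update_self, Pi.sub_apply, hμ.sum_abs_sub_diagCoupling_row, r, ↓reduceIte]
      linarith [hdiag a]
    · simp only [update_of_ne hk, abs_of_nonneg ((hκ k).nonneg _), (hκ k).marginal_fst, r,
        if_neg hk, one_mul, le_refl]
  have hcol : ∀ k b, ∑ a, |update κ j (μ - diagCoupling ν) k (a, b)| ≤ r k b := by
    intro k b
    rcases eq_or_ne k j with rfl | hk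
    · simp only [update_self, Pi.sub_apply, hμ.sum_abs_sub_diagCoupling_col, r, ↓reduceIte]
      linarith [hdiag b]
    · simp only [update_of_ne hk, abs_of_nonneg ((hκ k).nonneg _), (hκ k).marginal_snd, r,
        if_neg hk, one_mul, le_refl]
  have hprod : ∀ x : ι → α, ∏ k, r k (x k) = 2 * β * ∏ k, ν (x k) := fun x => by
    simp only [r, prod_mul_distrib, prod_ite_eq', mem_univ, if_true]
  rw [pairForm_update_sub]
  refine (abs_pairForm_self_le _ r r hrow hcol g).trans_eq ?_
  simp only [hprod, weightedInner_self, mul_sum, mul_assoc]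
  ring

theorem weightedInner_sub_pairForm_hybridCoupling_le {β : ℝ} (hν : ∀ a, 0 ≤ ν a)
    (hν1 : ∑ a, ν a = 1) (hμ : IsSelfCoupling ν μ) (hdiag : ∀ a, (1 - β) * ν a ≤ μ (a, a))
    {S : Finset ι} {g : (ι → α) → ℝ} (hg : DependsOn g S) (A : Finset ι) :
    weightedInner ν g g - pairForm (hybridCoupling μ ν A) g g ≤
      2 * β * #(A ∩ S) * weightedInner ν g g := by
  induction A using Finset.induction_on with
  | empty => simp [hybridCoupling, pairForm_diagCoupling]
  | @insert k A hk ih =>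
    rw [hybridCoupling_eq_update_of_notMem hk] at ih
    rw [hybridCoupling_insert]
    by_cases hkS : k ∈ S
    · have hstep :=
        abs_pairForm_update_sub_le (isSelfCoupling_hybridCoupling hν hμ A) hμ hdiag k g
      rw [insert_inter_of_mem hkS, card_insert_of_notMem fun h => hk (mem_inter.1 h).1]
      push_cast
      linarith [(abs_le.1 hstep).1]
    · have hinv := hg.apply_update_of_notMem (s := (S : Set ι)) hkS
      rwa [insert_inter_of_notMem hkS, pairForm_update_congr (π' := diagCoupling ν) _
        (by rw [hμ.sum_eq_one hν1, (isSelfCoupling_diagCoupling hν).sum_eq_one hν1]) hinv hinv]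

theorem weightedInner_self_le_two_mul_markovOp {β : ℝ} (hν : ∀ a, 0 < ν a) (hν1 : ∑ a, ν a = 1)
    (hμ : IsSelfCoupling ν μ) (hdiag : ∀ a, (1 - β) * ν a ≤ μ (a, a)) {S : Finset ι}
    (hS : #S * β ≤ 1 / 8) {g : (ι → α) → ℝ} (hg : DependsOn g S) :
    weightedInner ν g g ≤ 2 * weightedInner ν (markovOp μ ν g) (markovOp μ ν g) := by
  have hν0 : ∀ a, 0 ≤ ν a := fun a => (hν a).le
  have hlow := weightedInner_sub_pairForm_hybridCoupling_le hν0 hν1 hμ hdiag hg univ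
  rw [hybridCoupling, piecewise_univ, pairForm_eq_weightedInner_markovOp hν, univ_inter] at hlow
  have hN := weightedInner_self_nonneg hν0 g
  have hQ := weightedInner_self_nonneg hν0 (markovOp μ ν g)
  have hcs := weightedInner_sq_le hν0 (markovOp μ ν g) g
  have ht : 3 / 4 * weightedInner ν g g ≤ weightedInner ν (markovOp μ ν g) g := by nlinarith
  nlinarith

end Hybrid

section Influence

variable {ι α : Type*} [Fintype ι] [DecidableEq ι] [Fintype α] {ν : α → ℝ}

theorem weightedInner_eq_zero_of_ne (hν1 : ∑ a, ν a = 1) {G : Finset ι → (ι → α) → ℝ}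
    (hinv : ∀ S, ∀ j ∉ S, ∀ x a, G S (update x j a) = G S x)
    (hmean : ∀ S, ∀ j ∈ S, coordAvg ν j (G S) = 0) {S T : Finset ι} (hST : S ≠ T) :
    weightedInner ν (G S) (G T) = 0 := by
  by_cases hTS : T ⊆ S
  · obtain ⟨j, hjS, hjT⟩ := not_subset.1 fun hST' => hST (Subset.antisymm hST' hTS)
    rw [weightedInner_comm]
    exact weightedInner_eq_zero_of_coordAvg_eq_zero hν1 (hinv T j hjT) (hmean S j hjS)
  · obtain ⟨j, hjT, hjS⟩ := not_subset.1 hTS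
    exact weightedInner_eq_zero_of_coordAvg_eq_zero hν1 (hinv S j hjS) (hmean T j hjT)

theorem influence_eq_sum (hν1 : ∑ a, ν a = 1) {g : (ι → α) → ℝ} {G : Finset ι → (ι → α) → ℝ}
    (hgG : ∀ x, g x = ∑ S, G S x) (hinv : ∀ S, ∀ j ∉ S, ∀ x a, G S (update x j a) = G S x)
    (hmean : ∀ S, ∀ j ∈ S, coordAvg ν j (G S) = 0) (i : ι) :
    influence ν i g = ∑ S with i ∈ S, weightedInner ν (G S) (G S) := by
  have hdiff : ∀ x, g x - coordAvg ν i g x = ∑ S with i ∈ S, G S x := by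
    intro x
    rw [show g = fun x => ∑ S, G S x from funext hgG, coordAvg_sum, ← sum_sub_distrib, sum_filter]
    refine sum_congr rfl fun S _ => ?_
    split_ifs with hiS
    · rw [hmean S i hiS, Pi.zero_apply, sub_zero]
    · rw [coordAvg_eq_self hν1 (hinv S i hiS), sub_self]
  rw [influence, ← weightedInner_self, funext hdiff]
  exact weightedInner_sum_self_of_pairwise _ _ fun S _ T _ hST =>
    weightedInner_eq_zero_of_ne hν1 hinv hmean hST

theorem influence_markovOp_eq_sum [DecidableEq α] {μ : α × α → ℝ} (hν : ∀ a, 0 < ν a)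
    (hν1 : ∑ a, ν a = 1) (hμ : IsSelfCoupling ν μ) {f : (ι → α) → ℝ}
    {F : Finset ι → (ι → α) → ℝ} (hfF : ∀ x, f x = ∑ S, F S x) (hF : ∀ S, DependsOn (F S) S)
    (hmean : ∀ S, ∀ j ∈ S, coordAvg ν j (F S) = 0) (i : ι) :
    influence ν i (markovOp μ ν f) =
      ∑ S with i ∈ S, weightedInner ν (markovOp μ ν (F S)) (markovOp μ ν (F S)) :=
  influence_eq_sum hν1
    (fun y => by rw [show f = fun x => ∑ S, F S x from funext hfF, markovOp_sum])
    (fun S _ hj => markovOp_update_of_update_invariant hν hν1 hμ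
      ((hF S).apply_update_of_notMem hj))
    (fun S j hj => coordAvg_markovOp_eq_zero hν hμ (hmean S j hj)) i

end Influence

/-- If `μ` on `[m]×[m]` has both marginals `ν` and `μ(a,a) ≥ (1−β)ν(a)` with `dβ ≤ 1/8`,
then for every `f : [m]^n → ℝ` (with Efron–Stein decomposition `F`) and coordinate `i`,
`I_i^{≤d}[f] ≤ 2 I_i[T_μ^{⊗n} f]`. -/
theorem degree_influence_le_noisy_influence (n m d : ℕ) (β : ℝ) (hβ : 0 < β)
    (hdβ : (d : ℝ) * β ≤ 1 / 8)
    (ν : Fin m → ℝ) (hν : ∀ a, 0 < ν a) (hνsum : ∑ a, ν a = 1)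
    (μ : Fin m × Fin m → ℝ) (hμ0 : ∀ z, 0 ≤ μ z)
    (hmarg1 : ∀ a, (∑ b, μ (a, b)) = ν a)
    (hmarg2 : ∀ b, (∑ a, μ (a, b)) = ν b)
    (hdiag : ∀ a, (1 - β) * ν a ≤ μ (a, a))
    (f : (Fin n → Fin m) → ℝ) (F : Finset (Fin n) → (Fin n → Fin m) → ℝ)
    (hdecomp : ∀ x, f x = ∑ S : Finset (Fin n), F S x)
    (hjunta : ∀ (S : Finset (Fin n)) (x y : Fin n → Fin m),
      (∀ i ∈ S, x i = y i) → F S x = F S y)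
    (horth : ∀ S T : Finset (Fin n), T ⊂ S → ∀ g : (Fin n → Fin m) → ℝ,
      (∀ x y, (∀ i ∈ T, x i = y i) → g x = g y) →
      (∑ x, (∏ j, ν (x j)) * F S x * g x) = 0)
    (i : Fin n) :
    (∑ S ∈ Finset.univ.filter (fun S : Finset (Fin n) => i ∈ S ∧ S.card ≤ d),
        ∑ x, (∏ j, ν (x j)) * F S x ^ 2) ≤
      2 * ∑ y, (∏ j, ν (y j)) *
        ((∑ x, (∏ j, μ (x j, y j) / ν (y j)) * f x) -
          ∑ a, ν a *
            (∑ x, (∏ j, μ (x j, (Function.update y i a) j) / ν ((Function.update y i a) j)) *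
              f x)) ^ 2 := by
  have hμ : IsSelfCoupling ν μ := ⟨hμ0, hmarg1, hmarg2⟩
  have hdep : ∀ S, DependsOn (F S) S := fun S _ _ h => hjunta S _ _ h
  have hmeanF : ∀ S, ∀ j ∈ S, coordAvg ν j (F S) = 0 := fun S j hj =>
    coordAvg_eq_zero_of_orthogonal hν hνsum (hdep S) fun g hg =>
      horth S _ (erase_ssubset hj) g fun _ _ h => hg h
  change _ ≤ 2 * influence ν i (markovOp μ ν f)
  rw [influence_markovOp_eq_sum hν hνsum hμ hdecomp hdep hmeanF, mul_sum]
  calc ∑ S with i ∈ S ∧ #S ≤ d, ∑ x, (∏ j, ν (x j)) * F S x ^ 2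
      ≤ ∑ S with i ∈ S ∧ #S ≤ d, 2 * weightedInner ν (markovOp μ ν (F S)) (markovOp μ ν (F S)) :=
        sum_le_sum fun S hS => by
          rw [← weightedInner_self]
          refine weightedInner_self_le_two_mul_markovOp hν hνsum hμ hdiag ?_ (hdep S)
          have hSd : (#S : ℝ) ≤ d := by exact_mod_cast (mem_filter.1 hS).2.2
          exact (mul_le_mul_of_nonneg_right hSd hβ.le).trans hdβ
    _ ≤ ∑ S with i ∈ S, 2 * weightedInner ν (markovOp μ ν (F S)) (markovOp μ ν (F S)) :=
        sum_le_sum_of_subset_of_nonneg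
          (fun S hS => mem_filter.2 ⟨mem_univ S, (mem_filter.1 hS).2.1⟩)
          fun S _ _ => mul_nonneg zero_le_two (weightedInner_self_nonneg (fun a => (hν a).le) _)
end

section
/- Let C be a coupling of the uniform distribution on a multi-slice U_k ⊆ [m]^n and a product distribution ν^⊗n on [m]^n which is symmetric under the simultaneous S_n action, and let T_C* : L²([m]^n, ν^⊗n) → L²(U_k) be the adjoint lifting operator (T_C* g)(x) = E[g(y) | x]. Then for every A ⊆ [n] and every A-junta g on [m]^n, the function T_C* g is an A-junta on U_k. Consequently, if f : U_k → ℝ is orthogonal to all d-juntas on U_k, then T_C f = E[f(x) | y] is orthogonal to all d-juntas on ([m]^n, ν^⊗n). -/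
/-!
Two points of the multi-slice that agree on `A` differ by a permutation of the coordinates
fixing `A` pointwise (their value counts off `A` agree). By the `S_n`-symmetry of `C`, such a
permutation moves `E[g(y) | x]` to `E[g(y) | σ·x]` and fixes every `A`-junta `g`, so `T_C* g`
is an `A`-junta. The orthogonality statement follows from `⟪T_C f, h⟫ = ⟪f, T_C* h⟫`.
-/

/-- The action of `S_n` on `[m]^n` permuting coordinates: `(π·x)_i = x_{π(i)}`. -/
def act {n m : ℕ} (π : Equiv.Perm (Fin n)) (x : Fin n → Fin m) : Fin n → Fin m :=
  fun i => x (π i)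

/-- The multi-slice `U_k ⊆ [m]^n` as a finite set. -/
def sliceSet (n m : ℕ) (k : Fin m → ℕ) : Finset (Fin n → Fin m) :=
  Finset.univ.filter fun x => ∀ j, (Finset.univ.filter fun i => x i = j).card = k j

open Finset Equiv

def IsJunta {ι α β : Type*} (A : Finset ι) (g : (ι → α) → β) : Prop :=
  ∀ u v, (∀ i ∈ A, u i = v i) → g u = g v

lemma exists_perm_comp_eq_of_card_fiber_eq {α β : Type*} [Fintype α] [DecidableEq β]
    (F G : α → β) (h : ∀ b, Fintype.card {a // F a = b} = Fintype.card {a // G a = b}) :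
    ∃ σ : Perm α, ∀ a, F (σ a) = G a := by
  let e b : {a // G a = b} ≃ {a // F a = b} := Fintype.equivOfCardEq (h b).symm
  refine ⟨(sigmaFiberEquiv G).symm.trans
    ((sigmaCongrRight e).trans (sigmaFiberEquiv F)), fun a => ?_⟩
  exact (e (G a) ⟨a, rfl⟩).2

lemma card_fiber_compl_add_card_filter {ι α : Type*} [Fintype ι] [DecidableEq ι]
    [DecidableEq α] (A : Finset ι) (w : ι → α) (j : α) :
    Fintype.card {a : {i // i ∉ A} // w a = j} + #{i ∈ A | w i = j} = #{i | w i = j} := by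
  rw [Fintype.card_congr (subtypeSubtypeEquivSubtypeInter (· ∉ A) (w · = j)),
    Fintype.card_subtype, ← card_filter_add_card_filter_not (s := {i | w i = j}) (· ∈ A),
    filter_filter, filter_filter, add_comm]
  congr 2 <;> ext i <;> simp only [mem_filter, mem_univ, true_and] <;> tauto

lemma exists_perm_fixing_eq_act_of_mem_sliceSet {n m : ℕ} {k : Fin m → ℕ} {A : Finset (Fin n)}
    {u v : Fin n → Fin m} (hu : u ∈ sliceSet n m k) (hv : v ∈ sliceSet n m k)
    (hA : ∀ i ∈ A, u i = v i) :
    ∃ σ : Perm (Fin n), (∀ i ∈ A, σ i = i) ∧ act σ u = v := by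
  simp only [sliceSet, mem_filter, mem_univ, true_and] at hu hv
  have hA_fiber j : #{i ∈ A | u i = j} = #{i ∈ A | v i = j} :=
    congrArg card (filter_congr fun i hi => by rw [hA i hi])
  obtain ⟨τ, hτ⟩ := exists_perm_comp_eq_of_card_fiber_eq (fun a : {i // i ∉ A} => u a)
    (fun a => v a) fun j => by
      have hu' := card_fiber_compl_add_card_filter A u j
      have hv' := card_fiber_compl_add_card_filter A v j
      rw [hu j] at hu'
      rw [hv j, ← hA_fiber] at hv'
      omega
  refine ⟨Perm.ofSubtype τ, fun i hi => Perm.ofSubtype_apply_of_not_mem τ (not_not.2 hi),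
    funext fun i => ?_⟩
  by_cases hi : i ∈ A
  · simp only [act, Perm.ofSubtype_apply_of_not_mem τ (not_not.2 hi), hA i hi]
  · simp only [act, Perm.ofSubtype_apply_of_mem τ hi, hτ]

lemma sum_act_mul_eq_of_isJunta {n m : ℕ} {C : (Fin n → Fin m) × (Fin n → Fin m) → ℝ}
    (hsym : ∀ (π : Perm (Fin n)) x y, C (act π x, act π y) = C (x, y))
    {A : Finset (Fin n)} {g : (Fin n → Fin m) → ℝ} (hg : IsJunta A g)
    {σ : Perm (Fin n)} (hσ : ∀ i ∈ A, σ i = i) (x : Fin n → Fin m) :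
    ∑ y, C (act σ x, y) * g y = ∑ y, C (x, y) * g y := by
  refine (Fintype.sum_equiv (arrowCongr σ.symm (Equiv.refl _)) _ _ fun y => ?_).symm
  change C (x, y) * g y = C (act σ x, act σ y) * g (act σ y)
  rw [hsym, hg (act σ y) y fun i hi => congrArg y (hσ i hi)]

lemma sum_mul_eq_of_isJunta_of_mem_sliceSet {n m : ℕ} {k : Fin m → ℕ}
    {C : (Fin n → Fin m) × (Fin n → Fin m) → ℝ}
    (hsym : ∀ (π : Perm (Fin n)) x y, C (act π x, act π y) = C (x, y))
    {A : Finset (Fin n)} {g : (Fin n → Fin m) → ℝ} (hg : IsJunta A g)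
    {x x' : Fin n → Fin m} (hx : x ∈ sliceSet n m k) (hx' : x' ∈ sliceSet n m k)
    (hA : ∀ i ∈ A, x i = x' i) :
    ∑ y, C (x, y) * g y = ∑ y, C (x', y) * g y := by
  obtain ⟨σ, hσA, rfl⟩ := exists_perm_fixing_eq_act_of_mem_sliceSet hx hx' hA
  exact (sum_act_mul_eq_of_isJunta hsym hg hσA x).symm

lemma sum_mul_eq_zero_of_sum_eq_zero {ι : Type*} [Fintype ι] {w : ι → ℝ}
    (hw : ∀ i, 0 ≤ w i) (h : ∑ i, w i = 0) (f : ι → ℝ) : ∑ i, w i * f i = 0 :=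
  sum_eq_zero fun i _ => by
    rw [(sum_eq_zero_iff_of_nonneg fun i _ => hw i).1 h i (mem_univ i), zero_mul]

lemma sum_marginal_mul_div_marginal_mul {X Y : Type*} [Fintype X] [Fintype Y] {C : X × Y → ℝ}
    (hC0 : ∀ z, 0 ≤ C z) {p : Y → ℝ} (hp : ∀ y, ∑ x, C (x, y) = p y)
    (f : X → ℝ) (h : Y → ℝ) :
    ∑ y, p y * ((∑ x, C (x, y) * f x) / p y) * h y = ∑ x, f x * ∑ y, C (x, y) * h y := by
  have hcancel y : p y * ((∑ x, C (x, y) * f x) / p y) = ∑ x, C (x, y) * f x := by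
    by_cases hpy : p y = 0
    · rw [hpy, zero_mul, sum_mul_eq_zero_of_sum_eq_zero (fun x => hC0 (x, y)) (hpy ▸ hp y)]
    · exact mul_div_cancel₀ _ hpy
  simp only [hcancel, sum_mul, mul_sum]
  rw [sum_comm]
  exact Fintype.sum_congr _ _ fun x => Fintype.sum_congr _ _ fun y => by ring

theorem coupling_preserves_juntas_and_orthogonality_general (n m : ℕ) (k : Fin m → ℕ)
    (C : (Fin n → Fin m) × (Fin n → Fin m) → ℝ)
    (hC0 : ∀ z, 0 ≤ C z)
    (hmargX : ∀ x, (∑ y, C (x, y)) =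
      if x ∈ sliceSet n m k then 1 / ((sliceSet n m k).card : ℝ) else 0)
    (hmargY : ∀ y, (∑ x, C (x, y)) = ∏ i, (k (y i) : ℝ) / n)
    (hsym : ∀ (π : Equiv.Perm (Fin n)) x y, C (act π x, act π y) = C (x, y))
    (d : ℕ) :
    ((∀ (A : Finset (Fin n)) (g : (Fin n → Fin m) → ℝ),
        (∀ u v, (∀ i ∈ A, u i = v i) → g u = g v) →
        ∀ x x', x ∈ sliceSet n m k → x' ∈ sliceSet n m k → (∀ i ∈ A, x i = x' i) →
          (∑ y, C (x, y) * g y) / (∑ y, C (x, y)) =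
            (∑ y, C (x', y) * g y) / (∑ y, C (x', y))) ∧
      (∀ f : (Fin n → Fin m) → ℝ,
        (∀ h : (Fin n → Fin m) → ℝ,
          (∃ A : Finset (Fin n), A.card ≤ d ∧
            ∀ u v, u ∈ sliceSet n m k → v ∈ sliceSet n m k →
              (∀ i ∈ A, u i = v i) → h u = h v) →
          (∑ x ∈ sliceSet n m k, (1 / ((sliceSet n m k).card : ℝ)) * f x * h x) = 0) →
        ∀ h : (Fin n → Fin m) → ℝ,
          (∃ A : Finset (Fin n), A.card ≤ d ∧
            ∀ u v, (∀ i ∈ A, u i = v i) → h u = h v) →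
          (∑ y, (∏ i, (k (y i) : ℝ) / n) *
              ((∑ x, C (x, y) * f x) / ∏ i, (k (y i) : ℝ) / n) * h y) = 0)) := by
  refine ⟨fun A g hg x x' hx hx' hA => ?_, fun f hf h ⟨A, hAd, hh⟩ => ?_⟩
  · have hone : IsJunta A fun _ : Fin n → Fin m => (1 : ℝ) := fun _ _ _ => rfl
    have hmass := sum_mul_eq_of_isJunta_of_mem_sliceSet hsym hone hx hx' hA
    simp only [mul_one] at hmass
    rw [sum_mul_eq_of_isJunta_of_mem_sliceSet hsym hg hx hx' hA, hmass]
  · set S := sliceSet n m k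
    rw [sum_marginal_mul_div_marginal_mul hC0 hmargY]
    have hlift_off x (hx : x ∉ S) : ∑ y, C (x, y) * h y = 0 :=
      sum_mul_eq_zero_of_sum_eq_zero (fun y => hC0 (x, y)) (by rw [hmargX, if_neg hx]) h
    rw [← sum_subset (subset_univ S) fun x _ hx => by rw [hlift_off x hx, mul_zero]]
    rcases S.eq_empty_or_nonempty with hS | hS
    · rw [hS, sum_empty]
    have horth := hf (fun x => #S * ∑ y, C (x, y) * h y) ⟨A, hAd, fun u v hu hv hA => by
      rw [sum_mul_eq_of_isJunta_of_mem_sliceSet hsym hh hu hv hA]⟩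
    rw [← horth]
    refine sum_congr rfl fun x _ => ?_
    field_simp [hS.card_pos.ne']

/-- Let `C` be an `S_n`-symmetric coupling of the uniform measure on the multi-slice
`U_k` and the product measure `ν_k^⊗n`.  Then the adjoint lifting operator
`T_C* g (x) = E[g(y) | x]` maps `A`-juntas on `[m]^n` to `A`-juntas on `U_k`;
consequently, if `f : U_k → ℝ` is orthogonal to all `d`-juntas on `U_k`, then
`T_C f (y) = E[f(x) | y]` is orthogonal to all `d`-juntas on `([m]^n, ν_k^⊗n)`. -/
theorem coupling_preserves_juntas_and_orthogonality (n m : ℕ) (k : Fin m → ℕ)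
    (hn : 0 < n) (hk : ∑ j, k j = n)
    (C : (Fin n → Fin m) × (Fin n → Fin m) → ℝ)
    (hC0 : ∀ z, 0 ≤ C z)
    (hmargX : ∀ x, (∑ y, C (x, y)) =
      if x ∈ sliceSet n m k then 1 / ((sliceSet n m k).card : ℝ) else 0)
    (hmargY : ∀ y, (∑ x, C (x, y)) = ∏ i, (k (y i) : ℝ) / n)
    (hsym : ∀ (π : Equiv.Perm (Fin n)) x y, C (act π x, act π y) = C (x, y))
    (d : ℕ) :
    ((∀ (A : Finset (Fin n)) (g : (Fin n → Fin m) → ℝ),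
        (∀ u v, (∀ i ∈ A, u i = v i) → g u = g v) →
        ∀ x x', x ∈ sliceSet n m k → x' ∈ sliceSet n m k → (∀ i ∈ A, x i = x' i) →
          (∑ y, C (x, y) * g y) / (∑ y, C (x, y)) =
            (∑ y, C (x', y) * g y) / (∑ y, C (x', y))) ∧
      (∀ f : (Fin n → Fin m) → ℝ,
        (∀ h : (Fin n → Fin m) → ℝ,
          (∃ A : Finset (Fin n), A.card ≤ d ∧
            ∀ u v, u ∈ sliceSet n m k → v ∈ sliceSet n m k →
              (∀ i ∈ A, u i = v i) → h u = h v) →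
          (∑ x ∈ sliceSet n m k, (1 / ((sliceSet n m k).card : ℝ)) * f x * h x) = 0) →
        ∀ h : (Fin n → Fin m) → ℝ,
          (∃ A : Finset (Fin n), A.card ≤ d ∧
            ∀ u v, (∀ i ∈ A, u i = v i) → h u = h v) →
          (∑ y, (∏ i, (k (y i) : ℝ) / n) *
              ((∑ x, C (x, y) * f x) / ∏ i, (k (y i) : ℝ) / n) * h y) = 0)) :=
  coupling_preserves_juntas_and_orthogonality_general n m k C hC0 hmargX hmargY hsym d
end
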